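/- Let $R$ be a Noetherian ring, $M$ a finitely generated torsion-free $R$-module, and $a$ a non-zerodivisor of $R$. Then $\mathrm{U}(aM)=a\widetilde{M}\cap M$ inside $V=\mathrm{Q}(R)\otimes_R M$. -/

import Mathlib

/-!
Write `(aM : x)` for the ideal of `r` with `r x ∈ aM`. Since `a` is a non-zerodivisor, every prime
containing `a` has height at least one, so a prime of height at most one that contains `(aM : x)`
is a height-one minimal prime of `M/aM`. Hence `x ∈ U(aM)` exactly when `(aM : x)` has height at
least two. On the other side, `M` is torsion-free, so `M` embeds in `V` and `x = a g` with
`g ∈ V` forces `i g ∈ M ↔ i x ∈ aM`; thus `x ∈ aM̃` exactly when some ideal of height at least two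
is contained in `(aM : x)`.
-/

open Pointwise

/-- The height of an ideal. -/
noncomputable def idealHt {R : Type*} [CommRing R] (I : Ideal R) : ℕ∞ :=
  ⨅ p ∈ {p : PrimeSpectrum R | I ≤ p.asIdeal}, Order.height p

/-- `Min¹_R(M/aM)`: the height-one minimal primes of the support of `M/aM`
(equivalently, of the annihilator of `M/aM`, as `M` is finitely generated). -/
noncomputable def minOne (R : Type*) [CommRing R] (M : Type*) [AddCommGroup M]
    [Module R M] (a : R) : Set (Ideal R) :=
  {p | p ∈ (Module.annihilator R (M ⧸ (a • (⊤ : Submodule R M)))).minimalPrimes ∧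
    idealHt p = 1}

/-- `U(aM)`: the intersection of the primary components of `aM` in `M` at the
height-one minimal primes of `M/aM` (the primary component at a minimal prime
`p` being the saturation `{x ∈ M | sx ∈ aM for some s ∉ p}`); by convention
`U(aM) = M` when there are no such primes. -/
noncomputable def Uset (R : Type*) [CommRing R] (M : Type*) [AddCommGroup M]
    [Module R M] (a : R) : Set M :=
  ⋂ p ∈ minOne R M a, {x : M | ∃ s, s ∉ p ∧ s • x ∈ (a • (⊤ : Submodule R M))}

theorem idealHt_eq_height {R : Type*} [CommRing R] (I : Ideal R) : idealHt I = I.height := by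
  refine le_antisymm ?_ ?_
  · rw [Ideal.height_eq_inf_minimalPrimes]
    refine le_iInf₂ fun p hp => ?_
    have := hp.isPrime
    exact (iInf₂_le ⟨p, this⟩ hp.1.2).trans_eq (PrimeSpectrum.height_eq_orderHeight ⟨p, this⟩).symm
  · exact le_iInf₂ fun P hP =>
      (Ideal.height_mono hP).trans_eq (PrimeSpectrum.height_eq_orderHeight P)

theorem Ideal.one_le_height_of_mem_nonZeroDivisors {R : Type*} [CommRing R] {I : Ideal R} {a : R}
    (ha : a ∈ nonZeroDivisors R) (haI : a ∈ I) : 1 ≤ I.height :=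
  (Ideal.one_le_height_span_singleton_of_mem_nonZeroDivisors ha).trans
    (Ideal.height_mono ((Ideal.span_singleton_le_iff_mem I).mpr haI))

section Uset

variable {R : Type*} [CommRing R] {M : Type*} [AddCommGroup M] [Module R M] {a : R} {x : M}

theorem two_le_height_colon_of_mem_Uset (ha : a ∈ nonZeroDivisors R) (hx : x ∈ Uset R M a) :
    2 ≤ ((a • (⊤ : Submodule R M)).colon {x}).height := by
  set aM := a • (⊤ : Submodule R M)
  set A := Module.annihilator R (M ⧸ aM) with hA
  have hAx : A ≤ aM.colon {x} := by
    rw [hA, Submodule.annihilator_quotient]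
    exact Submodule.colon_mono le_rfl (Set.subset_univ _)
  have hA1 : 1 ≤ A.height := by
    refine Ideal.one_le_height_of_mem_nonZeroDivisors ha ?_
    rw [hA, Submodule.annihilator_quotient, Submodule.mem_colon]
    exact fun m _ => Submodule.smul_mem_pointwise_smul m a ⊤ trivial
  rw [Ideal.height_eq_inf_minimalPrimes]
  refine le_iInf₂ fun P hP => ?_
  have := hP.isPrime
  by_contra! hP2
  have hAP : A ≤ P := hAx.trans hP.1.2
  have hP1 : P.height = 1 := le_antisymm
    (Order.le_of_lt_add_one (by simpa [one_add_one_eq_two] using hP2))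
    (hA1.trans (Ideal.height_mono hAP))
  have : P.FiniteHeight := ⟨Or.inr (by simp [hP1])⟩
  have hPA : P ∈ A.minimalPrimes := Ideal.mem_minimalPrimes_of_height_le hAP (hP1 ▸ hA1)
  obtain ⟨s, hsP, hsx⟩ := Set.mem_iInter₂.mp hx P ⟨hPA, by rw [idealHt_eq_height, hP1]⟩
  exact hsP (hP.1.2 (Submodule.mem_colon_singleton.mpr hsx))

theorem mem_Uset_of_two_le_height {I : Ideal R} (hI : 2 ≤ I.height)
    (hIx : I ≤ (a • (⊤ : Submodule R M)).colon {x}) : x ∈ Uset R M a := by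
  refine Set.mem_iInter₂.mpr fun p hp => ?_
  obtain ⟨s, hsI, hsp⟩ := SetLike.not_le_iff_exists.mp fun hIp : I ≤ p => by
    have := hI.trans (Ideal.height_mono hIp)
    rw [← idealHt_eq_height, hp.2] at this
    exact absurd this (by norm_num)
  exact ⟨s, hsp, Submodule.mem_colon_singleton.mp (hIx hsI)⟩

theorem mem_Uset_iff (ha : a ∈ nonZeroDivisors R) :
    x ∈ Uset R M a ↔ 2 ≤ ((a • (⊤ : Submodule R M)).colon {x}).height :=
  ⟨two_le_height_colon_of_mem_Uset ha, fun h => mem_Uset_of_two_le_height h le_rfl⟩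

end Uset

theorem IsLocalizedModule.smul_mem_range_iff_of_smul_eq {R : Type*} [CommRing R]
    {S : Submonoid R} {M M' : Type*} [AddCommGroup M] [Module R M] [AddCommGroup M']
    [Module R M'] (f : M →ₗ[R] M') [IsLocalizedModule S f] (hf : Function.Injective f)
    {s : S} {g : M'} {x : M} (hg : (s : R) • g = f x) (i : R) :
    i • g ∈ LinearMap.range f ↔ i • x ∈ (s : R) • (⊤ : Submodule R M) := by
  rw [Submodule.mem_smul_pointwise_iff_exists]
  constructor
  · rintro ⟨m, hm⟩
    refine ⟨m, trivial, hf ?_⟩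
    rw [map_smul, map_smul, hm, ← hg, smul_comm]
  · rintro ⟨m, -, hm⟩
    refine ⟨m, IsLocalizedModule.smul_injective f s ?_⟩
    simp only [Submonoid.smul_def]
    rw [← map_smul, hm, map_smul, ← hg, smul_comm]

/-- `V = Q(R) ⊗ M` is realized as the localization of `M` at the non-zerodivisors, with `M`
embedded by `mk`, and `T` is `M̃`. -/
theorem stmt12_general {R : Type*} [CommRing R]
    {M : Type*} [AddCommGroup M] [Module R M]
    (htf : ∀ r ∈ nonZeroDivisors R, Function.Injective fun x : M => r • x)
    (a : R) (ha : a ∈ nonZeroDivisors R)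
    (T : Set (LocalizedModule (nonZeroDivisors R) M))
    (hT : T = {f | ∃ I : Ideal R, 2 ≤ idealHt I ∧ ∀ i ∈ I,
      i • f ∈ LinearMap.range (LocalizedModule.mkLinearMap (nonZeroDivisors R) M)}) :
    (LocalizedModule.mkLinearMap (nonZeroDivisors R) M) '' Uset R M a =
      (a • T) ∩ Set.range (LocalizedModule.mkLinearMap (nonZeroDivisors R) M) := by
  set f := LocalizedModule.mkLinearMap (nonZeroDivisors R) M
  have hf : Function.Injective f :=
    (IsLocalizedModule.injective_iff_isRegular (S := nonZeroDivisors R) f).mpr fun s => htf s s.2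
  let a' : nonZeroDivisors R := ⟨a, ha⟩
  subst hT
  ext y
  constructor
  · rintro ⟨x, hx, rfl⟩
    have hg := IsLocalizedModule.mk'_cancel' f x a'
    have hx2 := ((mem_Uset_iff ha).mp hx).trans_eq (idealHt_eq_height _).symm
    refine ⟨⟨_, ⟨_, hx2, fun i hi => ?_⟩, hg⟩, x, rfl⟩
    exact (IsLocalizedModule.smul_mem_range_iff_of_smul_eq f hf hg i).mpr
      (Submodule.mem_colon_singleton.mp hi)
  · rintro ⟨⟨g, ⟨I, hI, hIg⟩, hg⟩, x, rfl⟩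
    refine ⟨x, mem_Uset_of_two_le_height (idealHt_eq_height I ▸ hI) fun i hi => ?_, rfl⟩
    exact Submodule.mem_colon_singleton.mpr
      ((IsLocalizedModule.smul_mem_range_iff_of_smul_eq f hf (s := a') hg i).mp (hIg i hi))

/-- for a finitely generated torsion-free module `M` over a
Noetherian ring `R` and a non-zerodivisor `a`, `U(aM) = aM̃ ∩ M` inside
`V = Q(R) ⊗ M` (realized as the localized module at the non-zerodivisors, with
`M` embedded by `mk`). -/
theorem stmt12 {R : Type*} [CommRing R] [IsNoetherianRing R]
    {M : Type*} [AddCommGroup M] [Module R M] [Module.Finite R M]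
    (htf : ∀ r ∈ nonZeroDivisors R, Function.Injective fun x : M => r • x)
    (a : R) (ha : a ∈ nonZeroDivisors R)
    (T : Set (LocalizedModule (nonZeroDivisors R) M))
    (hT : T = {f | ∃ I : Ideal R, 2 ≤ idealHt I ∧ ∀ i ∈ I,
      i • f ∈ LinearMap.range (LocalizedModule.mkLinearMap (nonZeroDivisors R) M)}) :
    (LocalizedModule.mkLinearMap (nonZeroDivisors R) M) '' Uset R M a =
      (a • T) ∩ Set.range (LocalizedModule.mkLinearMap (nonZeroDivisors R) M) :=
  stmt12_general htf a ha T hT
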